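/- arXiv:2210.02611 — 3 statements merged into one kernel-verified Lean document; each statement's English description precedes it below -/
import Mathlib

section
/- Every finite undirected multigraph G = (V, E) with at least one vertex admits a fractional orientation y that simultaneously (i) minimizes the maximum fractional in-degree, i.e., max_{v ∈ V} ȳ(v) = min over all fractional orientations y' of max_{v ∈ V} ȳ'(v), and (ii) is locally optimal, i.e., for every edge e = {u, v}, y(e, v) > 0 implies ȳ(v) ≤ ȳ(u). -/
open Finset

/-- A fractional orientation of a finite undirected multigraph whose edges are
indexed by `E`, where edge `e` joins the two distinct vertices `a e` and `b e`.
`y e v` is the (nonnegative) fraction of edge `e` oriented toward `v`, and for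
each edge the two fractions at its endpoints sum to `1`. -/
structure FracOrient (V E : Type*) (a b : E → V) where
  y : E → V → ℝ
  nonneg : ∀ e v, 0 ≤ y e v
  sum_one : ∀ e, y e (a e) + y e (b e) = 1

/-- The fractional in-degree `ȳ(v)`: the sum, over edges incident to `v`,
of the fraction of the edge oriented toward `v`. -/
noncomputable def inDeg {V E : Type*} [Fintype E] [DecidableEq V]
    (a b : E → V) (y : E → V → ℝ) (v : V) : ℝ :=
  ∑ e ∈ univ.filter (fun e => a e = v ∨ b e = v), y e v

/-- The maximum fractional in-degree `max_{v ∈ V} ȳ(v)`. -/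
noncomputable def maxInDeg {V E : Type*} [Fintype E] [DecidableEq V]
    (a b : E → V) (y : E → V → ℝ) : ℝ :=
  sSup (Set.range (inDeg a b y))

/-- The density `|E(S)|/|S|` of a set `S` of vertices: the number of edges with
both endpoints in `S` (counted with multiplicity), divided by `|S|`. -/
noncomputable def density {V E : Type*} [Fintype E] [DecidableEq V]
    (a b : E → V) (S : Finset V) : ℝ :=
  ((univ.filter fun e => a e ∈ S ∧ b e ∈ S).card : ℝ) / S.card

/-- The maximum subgraph density `ρ(G) = max_{∅ ≠ S ⊆ V} |E(S)|/|S|`. -/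
noncomputable def maxDensity {V E : Type*} [Fintype E] [DecidableEq V]
    (a b : E → V) : ℝ :=
  sSup { d : ℝ | ∃ S : Finset V, S.Nonempty ∧ d = density a b S }

/-- A fractional orientation is locally optimal if it never directs any
fraction of an edge toward an endpoint of strictly larger in-degree. -/
def LocallyOpt {V E : Type*} [Fintype E] [DecidableEq V]
    (a b : E → V) (y : E → V → ℝ) : Prop :=
  ∀ e, (0 < y e (b e) → inDeg a b y (b e) ≤ inDeg a b y (a e)) ∧
       (0 < y e (a e) → inDeg a b y (a e) ≤ inDeg a b y (b e))

/-- `(α, β)`-local optimality: if `y(e,v) > 0` then `ȳ(v) < (1+α)·ȳ(u) + β`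
for the other endpoint `u` of `e`. -/
def ApxLocallyOpt {V E : Type*} [Fintype E] [DecidableEq V]
    (a b : E → V) (y : E → V → ℝ) (α β : ℝ) : Prop :=
  ∀ e, (0 < y e (b e) → inDeg a b y (b e) < (1 + α) * inDeg a b y (a e) + β) ∧
       (0 < y e (a e) → inDeg a b y (a e) < (1 + α) * inDeg a b y (b e) + β)

/-!
Minimize the convex potential `∑ᵥ ȳ(v)²` over the compact set of fractional orientations.
Shifting a small amount of an edge from its endpoint of larger in-degree to the other one
lowers the potential, so a minimizer is locally optimal. For a locally optimal orientation
no edge leaving the set `S` of vertices of maximum in-degree `M` sends anything into `S`, so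
`M |S| = ∑_{v ∈ S} ȳ(v) ≤ |E(S)|`; conversely every orientation has
`|E(S)| ≤ ∑_{v ∈ S} ȳ(v) ≤ |S| · max ȳ`. Hence a locally optimal orientation is optimal.
-/

section MaxInDeg

variable {V E : Type*} [Finite V] [Fintype E] [DecidableEq V] (a b : E → V) (y : E → V → ℝ)

lemma inDeg_le_maxInDeg (v : V) : inDeg a b y v ≤ maxInDeg a b y :=
  le_csSup (Set.finite_range _).bddAbove ⟨v, rfl⟩

lemma exists_inDeg_eq_maxInDeg [Nonempty V] : ∃ v, inDeg a b y v = maxInDeg a b y :=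
  (Set.range_nonempty _).csSup_mem (Set.finite_range _)

end MaxInDeg

section DoubleCounting

variable {V E : Type*} [Fintype E] [DecidableEq V] {a b : E → V}

lemma sum_inDeg_eq_sum_edges (hab : ∀ e, a e ≠ b e) (y : E → V → ℝ) (S : Finset V) :
    ∑ v ∈ S, inDeg a b y v =
      ∑ e, ((if a e ∈ S then y e (a e) else 0) + (if b e ∈ S then y e (b e) else 0)) := by
  simp only [inDeg, Finset.sum_filter]
  rw [Finset.sum_comm]
  refine Finset.sum_congr rfl fun e _ => ?_
  have hsplit : ∀ v, (if a e = v ∨ b e = v then y e v else 0) =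
      (if a e = v then y e v else 0) + (if b e = v then y e v else 0) := by
    intro v
    by_cases ha : a e = v <;> by_cases hb : b e = v
    · exact absurd (ha.trans hb.symm) (hab e)
    all_goals simp [ha, hb]
  simp only [hsplit, Finset.sum_add_distrib, Finset.sum_ite_eq]

lemma card_edges_eq_sum (S : Finset V) :
    ((univ.filter fun e => a e ∈ S ∧ b e ∈ S).card : ℝ) =
      ∑ e, if a e ∈ S ∧ b e ∈ S then (1 : ℝ) else 0 := by
  rw [Finset.sum_boole]

lemma card_edges_le_sum_inDeg (hab : ∀ e, a e ≠ b e) (o : FracOrient V E a b) (S : Finset V) :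
    ((univ.filter fun e => a e ∈ S ∧ b e ∈ S).card : ℝ) ≤
      ∑ v ∈ S, inDeg a b o.y v := by
  rw [card_edges_eq_sum, sum_inDeg_eq_sum_edges hab]
  refine Finset.sum_le_sum fun e _ => ?_
  have hsum := o.sum_one e
  have hya := o.nonneg e (a e)
  have hyb := o.nonneg e (b e)
  by_cases haS : a e ∈ S <;> by_cases hbS : b e ∈ S <;> simp [haS, hbS] <;> linarith

lemma sum_inDeg_le_card_edges (hab : ∀ e, a e ≠ b e) (o : FracOrient V E a b) (S : Finset V)
    (ha : ∀ e, a e ∈ S → b e ∉ S → o.y e (a e) = 0)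
    (hb : ∀ e, b e ∈ S → a e ∉ S → o.y e (b e) = 0) :
    ∑ v ∈ S, inDeg a b o.y v ≤
      ((univ.filter fun e => a e ∈ S ∧ b e ∈ S).card : ℝ) := by
  rw [card_edges_eq_sum, sum_inDeg_eq_sum_edges hab]
  refine Finset.sum_le_sum fun e _ => ?_
  by_cases haS : a e ∈ S <;> by_cases hbS : b e ∈ S
  · simp [haS, hbS, o.sum_one e]
  · simp [haS, hbS, ha e haS hbS]
  · simp [haS, hbS, hb e hbS haS]
  · simp [haS, hbS]

end DoubleCounting

section Density

variable {V E : Type*} [Fintype V] [Fintype E] [DecidableEq V] {a b : E → V}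

lemma density_le_maxInDeg (hab : ∀ e, a e ≠ b e) (o : FracOrient V E a b) {S : Finset V}
    (hS : S.Nonempty) : density a b S ≤ maxInDeg a b o.y := by
  rw [density, div_le_iff₀ (by exact_mod_cast hS.card_pos)]
  calc ((univ.filter fun e => a e ∈ S ∧ b e ∈ S).card : ℝ)
      ≤ ∑ v ∈ S, inDeg a b o.y v := card_edges_le_sum_inDeg hab o S
    _ ≤ ∑ _v ∈ S, maxInDeg a b o.y :=
        Finset.sum_le_sum fun v _ => inDeg_le_maxInDeg a b o.y v
    _ = maxInDeg a b o.y * S.card := by rw [Finset.sum_const, nsmul_eq_mul, mul_comm]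

lemma LocallyOpt.exists_maxInDeg_le_density [Nonempty V] (hab : ∀ e, a e ≠ b e)
    {o : FracOrient V E a b} (hloc : LocallyOpt a b o.y) :
    ∃ S : Finset V, S.Nonempty ∧ maxInDeg a b o.y ≤ density a b S := by
  set M := maxInDeg a b o.y
  set S := univ.filter fun v => inDeg a b o.y v = M
  have hmemS : ∀ v, v ∈ S ↔ inDeg a b o.y v = M := by simp [S]
  obtain ⟨v₀, hv₀⟩ := exists_inDeg_eq_maxInDeg a b o.y
  have hS : S.Nonempty := ⟨v₀, (hmemS v₀).2 hv₀⟩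
  have hout : ∀ u w, u ∈ S → w ∉ S → inDeg a b o.y w < inDeg a b o.y u := fun u w hu hw =>
    (hmemS u).1 hu ▸ (inDeg_le_maxInDeg a b o.y w).lt_of_ne fun h => hw ((hmemS w).2 h)
  have hsum : M * S.card ≤ ((univ.filter fun e => a e ∈ S ∧ b e ∈ S).card : ℝ) := by
    calc M * S.card = ∑ v ∈ S, inDeg a b o.y v := by
          rw [Finset.sum_congr rfl fun v hv => (hmemS v).1 hv, Finset.sum_const, nsmul_eq_mul,
            mul_comm]
      _ ≤ _ := by
          refine sum_inDeg_le_card_edges hab o S (fun e ha hb => ?_) (fun e hb ha => ?_)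
          · by_contra hne
            exact (hout _ _ ha hb).not_ge ((hloc e).2 ((o.nonneg e (a e)).lt_of_ne' hne))
          · by_contra hne
            exact (hout _ _ hb ha).not_ge ((hloc e).1 ((o.nonneg e (b e)).lt_of_ne' hne))
  exact ⟨S, hS, (le_div_iff₀ (by exact_mod_cast hS.card_pos)).2 hsum⟩

end Density

section Transfer

variable {V E : Type*} (a b : E → V)

/-- The bound `y ≤ 1`, which `FracOrient` does not impose away from the endpoints of an edge,
makes this set compact. -/
def fracOrientSet : Set (E → V → ℝ) :=
  Set.Icc 0 1 ∩ {y | ∀ e, y e (a e) + y e (b e) = 1}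

lemma isCompact_fracOrientSet : IsCompact (fracOrientSet a b) := by
  refine isCompact_Icc.inter_right ?_
  simp only [Set.ofPred_forall]
  exact isClosed_iInter fun e => isClosed_eq (by fun_prop) continuous_const

lemma half_mem_fracOrientSet : (fun _ _ => 1 / 2 : E → V → ℝ) ∈ fracOrientSet a b :=
  ⟨⟨fun _ _ => by norm_num, fun _ _ => by norm_num⟩, fun _ => by norm_num⟩

def transfer [DecidableEq E] [DecidableEq V] (y : E → V → ℝ) (e : E) (ε : ℝ) :
    E → V → ℝ :=
  fun e' v => y e' v + if e' = e then (if v = a e then ε else if v = b e then -ε else 0) else 0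

variable {a b} [DecidableEq E] [DecidableEq V]

lemma transfer_mem_fracOrientSet {y : E → V → ℝ} (hy : y ∈ fracOrientSet a b) {e : E}
    (hab : a e ≠ b e) {ε : ℝ} (hεa : -y e (a e) ≤ ε) (hεb : ε ≤ y e (b e)) :
    transfer a b y e ε ∈ fracOrientSet a b := by
  obtain ⟨⟨hy0, hy1⟩, hsum⟩ := hy
  have hsum_e := hsum e
  have hya : 0 ≤ y e (a e) := hy0 e (a e)
  have hyb : 0 ≤ y e (b e) := hy0 e (b e)
  refine ⟨⟨fun e' v => ?_, fun e' v => ?_⟩, fun e' => ?_⟩ <;>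
    simp only [transfer, Pi.zero_apply, Pi.one_apply]
  · have : 0 ≤ y e' v := hy0 e' v
    split_ifs <;> subst_vars <;> linarith
  · have : y e' v ≤ 1 := hy1 e' v
    split_ifs <;> subst_vars <;> linarith
  · by_cases he : e' = e
    · subst he
      simp only [if_true, if_neg hab.symm]
      linarith
    · simp [he, hsum e']

lemma inDeg_transfer [Fintype E] (y : E → V → ℝ) (e : E) (ε : ℝ) (v : V) :
    inDeg a b (transfer a b y e ε) v =
      inDeg a b y v + if v = a e then ε else if v = b e then -ε else 0 := by
  simp only [inDeg, transfer, Finset.sum_add_distrib, Finset.sum_ite_eq', Finset.mem_filter,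
    Finset.mem_univ, true_and]
  congr 1
  split_ifs <;> simp_all [eq_comm]

end Transfer

section Potential

variable {V E : Type*} [Fintype V] [Fintype E] [DecidableEq V] (a b : E → V)

noncomputable def potential (y : E → V → ℝ) : ℝ :=
  ∑ v, inDeg a b y v ^ 2

lemma continuous_potential : Continuous (potential a b) := by
  unfold potential inDeg
  fun_prop

variable {a b} [DecidableEq E]

lemma potential_transfer {e : E} (hab : a e ≠ b e) (y : E → V → ℝ) (ε : ℝ) :
    potential a b (transfer a b y e ε) =
      potential a b y + 2 * ε * (inDeg a b y (a e) - inDeg a b y (b e) + ε) := by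
  simp only [potential, inDeg_transfer]
  have hexpand : ∀ x g : ℝ, (x + g) ^ 2 = x ^ 2 + (2 * x * g + g ^ 2) := fun _ _ => by ring
  rw [Finset.sum_congr rfl fun v _ => hexpand _ _, Finset.sum_add_distrib]
  congr 1
  rw [Finset.sum_eq_add_of_mem (a e) (b e) (mem_univ _) (mem_univ _) hab]
  · simp only [if_true, if_neg hab.symm]
    ring
  · rintro v - ⟨hva, hvb⟩
    simp [hva, hvb]

end Potential

section Existence

variable {V E : Type*} [Fintype V] [Fintype E] [DecidableEq V] {a b : E → V}

lemma locallyOpt_of_isMinOn (hab : ∀ e, a e ≠ b e) {y : E → V → ℝ}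
    (hy : y ∈ fracOrientSet a b) (hmin : IsMinOn (potential a b) (fracOrientSet a b) y) :
    LocallyOpt a b y := by
  classical
  have key : ∀ e ε, -y e (a e) ≤ ε → ε ≤ y e (b e) →
      0 ≤ ε * (inDeg a b y (a e) - inDeg a b y (b e) + ε) := by
    intro e ε hεa hεb
    have := isMinOn_iff.mp hmin _ (transfer_mem_fracOrientSet hy (hab e) hεa hεb)
    rw [potential_transfer (hab e)] at this
    linarith
  have hy0 : ∀ e v, 0 ≤ y e v := hy.1.1
  intro e
  set A := inDeg a b y (a e)
  set B := inDeg a b y (b e)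
  constructor
  · intro hpos
    by_contra! hlt
    have hε : 0 < min (y e (b e)) ((B - A) / 2) := lt_min hpos (by linarith)
    have hgain : A - B + min (y e (b e)) ((B - A) / 2) < 0 := by
      linarith [min_le_right (y e (b e)) ((B - A) / 2)]
    exact (mul_neg_of_pos_of_neg hε hgain).not_ge
      (key e _ (by linarith [hy0 e (a e)]) (min_le_left _ _))
  · intro hpos
    by_contra! hlt
    have hε : 0 < min (y e (a e)) ((A - B) / 2) := lt_min hpos (by linarith)
    have hgain : 0 < A - B - min (y e (a e)) ((A - B) / 2) := by
      linarith [min_le_right (y e (a e)) ((A - B) / 2)]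
    refine (mul_neg_of_neg_of_pos (neg_neg_of_pos hε) hgain).not_ge ?_
    simpa [sub_eq_add_neg] using
      key e (-min (y e (a e)) ((A - B) / 2)) (neg_le_neg (min_le_left _ _))
        (by linarith [hy0 e (b e)])

lemma exists_locallyOpt (hab : ∀ e, a e ≠ b e) :
    ∃ o : FracOrient V E a b, LocallyOpt a b o.y := by
  obtain ⟨y, hy, hmin⟩ := (isCompact_fracOrientSet a b).exists_isMinOn
    ⟨_, half_mem_fracOrientSet a b⟩ (continuous_potential a b).continuousOn
  exact ⟨⟨y, hy.1.1, hy.2⟩, locallyOpt_of_isMinOn hab hy hmin⟩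

end Existence

/-- Every finite undirected multigraph admits a fractional
orientation that is simultaneously optimal (minimizing the maximum fractional
in-degree) and locally optimal. -/
theorem exists_locallyOpt_min_orientation {V E : Type*} [Fintype V] [Fintype E]
    [DecidableEq V] [Nonempty V] (a b : E → V) (hab : ∀ e, a e ≠ b e) :
    ∃ o : FracOrient V E a b, LocallyOpt a b o.y ∧
      IsLeast { μ : ℝ | ∃ o' : FracOrient V E a b, μ = maxInDeg a b o'.y }
        (maxInDeg a b o.y) := by
  obtain ⟨o, hloc⟩ := exists_locallyOpt hab
  obtain ⟨S, hS, hle⟩ := hloc.exists_maxInDeg_le_density hab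
  refine ⟨o, hloc, ⟨o, rfl⟩, ?_⟩
  rintro _ ⟨o', rfl⟩
  exact hle.trans (density_le_maxInDeg hab o' hS)
end

section
/- There exist universal constants c, C > 0 such that the following holds. Let ε ∈ (0, 1), let G = (V, E) be a finite undirected multigraph on n ≥ 2 vertices, let β > 0, and let y be a (c·ε²/log n, β)-locally optimal fractional orientation of G. Then the maximum fractional in-degree satisfies max_{v ∈ V} ȳ(v) ≤ (1 + ε)·ρ(G) + C·β·(log n)/ε. -/
open Finset

lemma sumT_le_card {V E : Type} [Fintype V] [Fintype E] [DecidableEq V]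
    (a b : E → V) (hab : ∀ e, a e ≠ b e) (o : FracOrient V E a b)
    {α β : ℝ} (hα : 0 < α)
    (hapx : ApxLocallyOpt a b o.y α β)
    (s s' : ℝ) (hss : s' ≤ s) (hs' : s' ≤ (s - β) / (1 + α)) :
    ∑ v ∈ univ.filter (fun v => s ≤ inDeg a b o.y v), inDeg a b o.y v ≤
      ((univ.filter fun e => s' ≤ inDeg a b o.y (a e) ∧ s' ≤ inDeg a b o.y (b e)).card : ℝ) := by
  set d := inDeg a b o.y with hd
  have h1α : (0:ℝ) < 1 + α := by linarith
  have hmul : s' * (1 + α) ≤ s - β := by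
    rw [le_div_iff₀ h1α] at hs'; exact hs'
  have hedge : ∀ e : E,
      (if s ≤ d (a e) then o.y e (a e) else 0) + (if s ≤ d (b e) then o.y e (b e) else 0)
      ≤ (if s' ≤ d (a e) ∧ s' ≤ d (b e) then (1:ℝ) else 0) := by
    intro e
    by_cases hP : s' ≤ d (a e) ∧ s' ≤ d (b e)
    · rw [if_pos hP]
      have h1 : (if s ≤ d (a e) then o.y e (a e) else 0) ≤ o.y e (a e) := by
        split
        · exact le_rfl
        · exact o.nonneg e _
      have h2 : (if s ≤ d (b e) then o.y e (b e) else 0) ≤ o.y e (b e) := by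
        split
        · exact le_rfl
        · exact o.nonneg e _
      have := o.sum_one e
      linarith
    · rw [if_neg hP]
      have h1 : (if s ≤ d (a e) then o.y e (a e) else 0) ≤ 0 := by
        split_ifs with h
        · by_contra hy
          push_neg at hy
          have hy' : 0 < o.y e (a e) := lt_of_le_of_lt (le_refl 0) (lt_of_not_ge (by linarith))
          have hlt := (hapx e).2 hy'
          rw [← hd] at hlt
          exact hP ⟨le_trans hss h, by nlinarith⟩
        · exact le_rfl
      have h2 : (if s ≤ d (b e) then o.y e (b e) else 0) ≤ 0 := by
        split_ifs with h
        · by_contra hy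
          push_neg at hy
          have hy' : 0 < o.y e (b e) := lt_of_not_ge (by linarith)
          have hlt := (hapx e).1 hy'
          rw [← hd] at hlt
          exact hP ⟨by nlinarith, le_trans hss h⟩
        · exact le_rfl
      linarith
  calc ∑ v ∈ univ.filter (fun v => s ≤ d v), d v
      = ∑ v ∈ univ.filter (fun v => s ≤ d v), ∑ e ∈ univ,
          (if a e = v ∨ b e = v then o.y e v else 0) := by
        refine Finset.sum_congr rfl fun v _ => ?_
        rw [hd]; unfold inDeg
        rw [Finset.sum_filter]
    _ = ∑ e ∈ univ, ∑ v ∈ univ.filter (fun v => s ≤ d v),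
          (if a e = v ∨ b e = v then o.y e v else 0) := Finset.sum_comm
    _ = ∑ e ∈ univ,
          ((if s ≤ d (a e) then o.y e (a e) else 0) + (if s ≤ d (b e) then o.y e (b e) else 0)) := by
        refine Finset.sum_congr rfl fun e _ => ?_
        have hsplit : ∀ v ∈ univ.filter (fun v => s ≤ d v),
            (if a e = v ∨ b e = v then o.y e v else 0) =
            (if a e = v then o.y e v else 0) + (if b e = v then o.y e v else 0) := by
          intro v _
          by_cases h1 : a e = v <;> by_cases h2 : b e = v <;>
            simp_all [hab e] <;> try (exact absurd (h1.trans h2.symm) (hab e))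
        rw [Finset.sum_congr rfl hsplit, Finset.sum_add_distrib,
          Finset.sum_ite_eq, Finset.sum_ite_eq]
        simp [Finset.mem_filter]
    _ ≤ ∑ e ∈ univ, (if s' ≤ d (a e) ∧ s' ≤ d (b e) then (1:ℝ) else 0) :=
        Finset.sum_le_sum fun e _ => hedge e
    _ = ((univ.filter fun e => s' ≤ d (a e) ∧ s' ≤ d (b e)).card : ℝ) := by
        rw [Finset.sum_boole]

lemma density_le_maxDensity {V E : Type} [Fintype V] [Fintype E] [DecidableEq V]
    (a b : E → V) (S : Finset V) (hS : S.Nonempty) :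
    density a b S ≤ maxDensity a b := by
  have hfin : {d : ℝ | ∃ S : Finset V, S.Nonempty ∧ d = density a b S}.Finite := by
    apply Set.Finite.subset (Set.finite_range (density a b))
    rintro x ⟨T, _, rfl⟩
    exact ⟨T, rfl⟩
  exact le_csSup hfin.bddAbove ⟨S, hS, rfl⟩

lemma maxDensity_nonneg {V E : Type} [Fintype V] [Fintype E] [DecidableEq V]
    (a b : E → V) [Nonempty V] : 0 ≤ maxDensity a b := by
  refine le_trans ?_ (density_le_maxDensity a b univ univ_nonempty)
  unfold density
  positivity

lemma inDeg_nonneg {V E : Type} [Fintype V] [Fintype E] [DecidableEq V]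
    (a b : E → V) (o : FracOrient V E a b) (v : V) : 0 ≤ inDeg a b o.y v :=
  Finset.sum_nonneg fun e _ => o.nonneg e v

lemma exists_max_inDeg {V E : Type} [Fintype V] [Fintype E] [DecidableEq V] [Nonempty V]
    (a b : E → V) (y : E → V → ℝ) :
    ∃ v : V, inDeg a b y v = maxInDeg a b y ∧ ∀ w, inDeg a b y w ≤ maxInDeg a b y := by
  have hfin : (Set.range (inDeg a b y)).Finite := Set.finite_range _
  have hne : (Set.range (inDeg a b y)).Nonempty := Set.range_nonempty _
  obtain ⟨v, hv⟩ := hne.csSup_mem hfin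
  exact ⟨v, hv, fun w => le_csSup hfin.bddAbove ⟨w, rfl⟩⟩

set_option maxHeartbeats 1000000 in
/-- There exist universal constants `c, C > 0` such that for
every `ε ∈ (0,1)`, every finite multigraph on `n ≥ 2` vertices, every `β > 0`,
and every `(c·ε²/log n, β)`-locally optimal fractional orientation, the maximum
fractional in-degree is at most `(1+ε)·ρ(G) + C·β·(log n)/ε`. -/
theorem apxLocal_implies_eps_global : ∃ c C : ℝ, 0 < c ∧ 0 < C ∧
    ∀ (V E : Type) [Fintype V] [Fintype E] [DecidableEq V],
    ∀ a b : E → V, (∀ e, a e ≠ b e) → 2 ≤ Fintype.card V →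
    ∀ ε : ℝ, 0 < ε → ε < 1 →
    ∀ β : ℝ, 0 < β →
    ∀ o : FracOrient V E a b,
      ApxLocallyOpt a b o.y (c * ε ^ 2 / Real.log (Fintype.card V)) β →
      maxInDeg a b o.y ≤
        (1 + ε) * maxDensity a b +
          C * β * Real.log (Fintype.card V) / ε := by
  refine ⟨1/64, 16, by norm_num, by norm_num, ?_⟩
  intro V E _ _ _ a b hab hn ε hε0 hε1 β hβ o hapx
  have hV : Nonempty V := Fintype.card_pos_iff.mp (by omega)
  obtain ⟨v₀, hv₀, hmax⟩ := exists_max_inDeg a b o.y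
  set N : ℝ := (Fintype.card V : ℝ) with hNdef
  have hN2 : (2:ℝ) ≤ N := by rw [hNdef]; exact_mod_cast hn
  set L := Real.log N with hLdef
  clear_value N
  have hlog2 : (0.6931471803 : ℝ) < Real.log 2 := Real.log_two_gt_d9
  have hL2 : Real.log 2 ≤ L := Real.log_le_log (by norm_num) hN2
  have hL : (1/2 : ℝ) < L := by linarith
  clear_value L
  set α := 1 / 64 * ε ^ 2 / L with hαdef
  have hαL : α = ε ^ 2 / (64 * L) := by rw [hαdef]; ring
  clear_value α
  have hα : 0 < α := by rw [hαL]; exact div_pos (by positivity) (by linarith)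
  have h1α : (0:ℝ) < 1 + α := by linarith
  set d := inDeg a b o.y with hd
  set D := maxInDeg a b o.y with hD
  have hD0 : 0 ≤ D := hv₀ ▸ inDeg_nonneg a b o v₀
  clear_value D
  set ρ := maxDensity a b with hρ
  have hρ0 : 0 ≤ ρ := maxDensity_nonneg a b
  clear_value ρ
  -- thresholds
  set t : ℕ → ℝ := fun i => (D + β / α) / (1 + α) ^ i - β / α with ht
  clear_value t
  have ht0 : t 0 = D := by rw [ht]; simp
  have htrec : ∀ i, t (i + 1) = (t i - β) / (1 + α) := by
    intro i
    rw [ht]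
    simp only
    rw [pow_succ]
    field_simp
    ring
  have htanti : ∀ i, t (i + 1) ≤ t i := by
    intro i
    have hDβ : 0 ≤ D + β / α := add_nonneg hD0 (div_nonneg hβ.le hα.le)
    have hple : (1 + α) ^ i ≤ (1 + α) ^ (i + 1) := by
      apply pow_le_pow_right₀ (by linarith) (by omega)
    have hdivle : (D + β / α) / (1 + α) ^ (i + 1) ≤ (D + β / α) / (1 + α) ^ i := by
      gcongr
    rw [ht]
    simp only
    linarith
  -- level sets
  set S : ℕ → Finset V := fun i => univ.filter (fun v => t i ≤ d v) with hSdef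
  have hSsub : ∀ i, S i ⊆ S (i + 1) := by
    intro i v hv
    rw [hSdef] at hv ⊢
    simp only [mem_filter, mem_univ, true_and] at hv ⊢
    linarith [htanti i]
  have hSne : ∀ i, v₀ ∈ S i := by
    intro i
    induction i with
    | zero =>
      rw [hSdef]
      simp only [mem_filter, mem_univ, true_and, ht0, hv₀]
      try exact le_rfl
    | succ i ih => exact hSsub i ih
  have hScard : ∀ i, (1:ℝ) ≤ ((S i).card : ℝ) := by
    intro i
    have : 0 < (S i).card := Finset.card_pos.mpr ⟨v₀, hSne i⟩
    exact_mod_cast this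
  -- key counting inequality
  have hkey : ∀ i, t i * ((S i).card : ℝ) ≤ ρ * ((S (i + 1)).card : ℝ) := by
    intro i
    have hA := sumT_le_card a b hab o hα hapx (t i) (t (i + 1)) (htanti i)
      (le_of_eq (htrec i))
    have hsum : t i * ((S i).card : ℝ) ≤ ∑ v ∈ S i, d v := by
      have h := Finset.card_nsmul_le_sum (S i) d (t i)
        (fun v hv => by
          rw [hSdef] at hv
          simpa using (Finset.mem_filter.mp hv).2)
      rw [nsmul_eq_mul] at h
      linarith [h]
    have hEq : (univ.filter fun e => t (i + 1) ≤ d (a e) ∧ t (i + 1) ≤ d (b e)) =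
        (univ.filter fun e => a e ∈ S (i + 1) ∧ b e ∈ S (i + 1)) := by
      apply Finset.filter_congr
      intro e _
      rw [hSdef]
      simp [Finset.mem_filter]
    have hcardpos : (0:ℝ) < ((S (i + 1)).card : ℝ) := by linarith [hScard (i + 1)]
    have hdens : density a b (S (i + 1)) ≤ ρ := by
      rw [hρ]
      exact density_le_maxDensity a b (S (i + 1)) ⟨v₀, hSne (i + 1)⟩
    have hEcard : ((univ.filter fun e => a e ∈ S (i + 1) ∧ b e ∈ S (i + 1)).card : ℝ)
        ≤ ρ * ((S (i + 1)).card : ℝ) := by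
      rw [density] at hdens
      rw [← div_le_iff₀ hcardpos] at *
      exact hdens
    rw [hEq] at hA
    calc t i * ((S i).card : ℝ) ≤ ∑ v ∈ S i, d v := hsum
      _ ≤ _ := hA
      _ ≤ ρ * ((S (i + 1)).card : ℝ) := hEcard
  -- pigeonhole
  set k := ⌈4 * L / ε⌉₊ + 1 with hk
  have hk1 : 4 * L / ε + 1 ≤ (k : ℝ) := by
    rw [hk]
    push_cast
    have := Nat.le_ceil (4 * L / ε)
    linarith
  have hk2 : (k : ℝ) ≤ 4 * L / ε + 2 := by
    rw [hk]
    push_cast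
    have := Nat.ceil_lt_add_one (div_nonneg (by linarith : (0:ℝ) ≤ 4 * L) hε0.le)
    linarith
  clear_value k
  have hpig : ∃ i, i < k ∧ ((S (i + 1)).card : ℝ) ≤ (1 + ε / 3) * ((S i).card : ℝ) := by
    by_contra hcon
    push_neg at hcon
    have hgrow : ∀ j, j ≤ k → (1 + ε / 3) ^ j ≤ ((S j).card : ℝ) := by
      intro j
      induction j with
      | zero => intro _; simpa using hScard 0
      | succ j ih =>
        intro hj
        have h1 := ih (by omega)
        have h2 := hcon j (by omega)
        calc (1 + ε / 3) ^ (j + 1) = (1 + ε / 3) * (1 + ε / 3) ^ j := by ring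
          _ ≤ (1 + ε / 3) * ((S j).card : ℝ) := by nlinarith
          _ ≤ ((S (j + 1)).card : ℝ) := le_of_lt h2
    have hSk : ((S k).card : ℝ) ≤ N := by
      rw [hNdef]
      exact_mod_cast Finset.card_le_univ (S k) |>.trans (le_of_eq (Finset.card_univ))
    have hlog13 : ε / 4 ≤ Real.log (1 + ε / 3) := by
      have h := Real.log_le_sub_one_of_pos (inv_pos.mpr (by linarith : (0:ℝ) < 1 + ε / 3))
      rw [Real.log_inv] at h
      have hx : (1 + ε / 3)⁻¹ ≤ 1 - ε / 4 := by
        rw [inv_eq_one_div, div_le_iff₀ (by linarith : (0:ℝ) < 1 + ε / 3)]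
        nlinarith
      linarith
    have hLk : L < (k : ℝ) * Real.log (1 + ε / 3) := by
      have h2 : (0:ℝ) ≤ (k : ℝ) := Nat.cast_nonneg k
      have h3 : (4 * L / ε + 1) * (ε / 4) = L + ε / 4 := by field_simp
      have h4 : (4 * L / ε + 1) * (ε / 4) ≤ (k:ℝ) * (ε / 4) :=
        mul_le_mul_of_nonneg_right hk1 (by linarith)
      have h5 : (k:ℝ) * (ε / 4) ≤ (k:ℝ) * Real.log (1 + ε / 3) :=
        mul_le_mul_of_nonneg_left hlog13 h2
      linarith
    have hNlt : N < (1 + ε / 3) ^ k := by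
      have hpow : (0:ℝ) < (1 + ε / 3) ^ k := pow_pos (by linarith) k
      calc N = Real.exp L := by rw [hLdef, Real.exp_log (by linarith)]
        _ < Real.exp (Real.log ((1 + ε / 3) ^ k)) := by
            apply Real.exp_lt_exp.mpr
            rw [Real.log_pow]
            exact_mod_cast hLk
        _ = (1 + ε / 3) ^ k := Real.exp_log hpow
    linarith [hgrow k le_rfl]
  obtain ⟨i, hik, hgr⟩ := hpig
  -- t i ≤ (1+ε/3) ρ
  have hti : t i ≤ (1 + ε / 3) * ρ := by
    have h1 := hkey i
    have h2 : ρ * ((S (i + 1)).card : ℝ) ≤ ρ * ((1 + ε / 3) * ((S i).card : ℝ)) :=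
      mul_le_mul_of_nonneg_left hgr hρ0
    have h3 := hScard i
    have hc : (0:ℝ) < ((S i).card : ℝ) := by linarith
    have h5 : t i * ((S i).card : ℝ) ≤ ((1 + ε / 3) * ρ) * ((S i).card : ℝ) := by
      calc t i * ((S i).card : ℝ) ≤ ρ * ((S (i + 1)).card : ℝ) := h1
        _ ≤ ρ * ((1 + ε / 3) * ((S i).card : ℝ)) := h2
        _ = ((1 + ε / 3) * ρ) * ((S i).card : ℝ) := by ring
    exact le_of_mul_le_mul_right h5 hc
  -- lower bound on t
  have htlow : ∀ j : ℕ, D / (1 + α) ^ j - β * j ≤ t j := by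
    intro j
    induction j with
    | zero => simp [ht0]
    | succ j ih =>
      rw [htrec j]
      have h2 : (D / (1 + α) ^ j - β * j - β) / (1 + α) ≤ (t j - β) / (1 + α) := by
        gcongr
        try linarith
      have e1 : (D / (1 + α) ^ j - β * j - β) / (1 + α)
          = D / (1 + α) ^ (j + 1) - (β * j + β) / (1 + α) := by
        rw [pow_succ]
        field_simp
        ring
      have e2 : (β * j + β) / (1 + α) ≤ β * (j + 1) := by
        rw [div_le_iff₀ h1α]
        have hj0 : (0:ℝ) ≤ (j:ℝ) := Nat.cast_nonneg j
        nlinarith [mul_nonneg (mul_nonneg hβ.le (show (0:ℝ) ≤ (j:ℝ) + 1 by linarith)) hα.le]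
      push_cast
      push_cast at e2
      linarith [h2, e1 ▸ h2]
  have hik' : D / (1 + α) ^ k - β * k ≤ t i := by
    have hple : (1 + α) ^ i ≤ (1 + α) ^ k := by
      apply pow_le_pow_right₀ (by linarith) (le_of_lt hik)
    have h1 : D / (1 + α) ^ k ≤ D / (1 + α) ^ i := by
      gcongr
    have h2 : β * (i:ℝ) ≤ β * (k:ℝ) :=
      mul_le_mul_of_nonneg_left (by exact_mod_cast le_of_lt hik) hβ.le
    linarith [htlow i]
  have hpowk : (0:ℝ) < (1 + α) ^ k := pow_pos h1α k
  have hDle : D ≤ (1 + α) ^ k * ((1 + ε / 3) * ρ) + (1 + α) ^ k * (β * k) := by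
    have h1 : D / (1 + α) ^ k ≤ (1 + ε / 3) * ρ + β * k := by linarith
    have h2 : D / (1 + α) ^ k * (1 + α) ^ k = D := by field_simp
    nlinarith [mul_le_mul_of_nonneg_right h1 hpowk.le]
  -- numerics
  have hαk : (k : ℝ) * α ≤ ε / 8 := by
    rw [hαL]
    have hkε : (k:ℝ) * ε ≤ 4 * L + 2 * ε := by
      have h1 : 4 * L / ε * ε = 4 * L := by field_simp
      nlinarith [hk2]
    have hpos : (0:ℝ) ≤ ε / (64 * L) := div_nonneg hε0.le (by linarith)
    have h1 : (↑k : ℝ) * (ε ^ 2 / (64 * L)) = (↑k * ε) * (ε / (64 * L)) := by ring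
    have h2 : ((↑k : ℝ) * ε) * (ε / (64 * L)) ≤ (4 * L + 2 * ε) * (ε / (64 * L)) :=
      mul_le_mul_of_nonneg_right hkε hpos
    have h3 : (4 * L + 2 * ε) * (ε / (64 * L)) ≤ ε / 8 := by
      rw [← sub_nonneg]
      have e5 : ε / 8 - (4 * L + 2 * ε) * (ε / (64 * L)) = (2 * L - ε) * ε / (32 * L) := by
        field_simp
        ring
      rw [e5]
      apply div_nonneg (mul_nonneg (by linarith) hε0.le) (by linarith)
    linarith
  have hPle : (1 + α) ^ k ≤ 1 + ε / 7 := by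
    have hlogα : Real.log (1 + α) ≤ α := by
      have := Real.log_le_sub_one_of_pos h1α
      linarith
    have hlog : Real.log ((1 + α) ^ k) ≤ ε / 8 := by
      rw [Real.log_pow]
      calc ((k:ℕ):ℝ) * Real.log (1 + α) ≤ (k:ℝ) * α := by
            apply mul_le_mul_of_nonneg_left hlogα (Nat.cast_nonneg k)
        _ ≤ ε / 8 := hαk
    have h1 : (1 + α) ^ k = Real.exp (Real.log ((1 + α) ^ k)) :=
      (Real.exp_log hpowk).symm
    have h2 : Real.exp (Real.log ((1 + α) ^ k)) ≤ Real.exp (ε / 8) :=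
      Real.exp_le_exp.mpr hlog
    have h3 : Real.exp (ε / 8) ≤ 1 / (1 - ε / 8) := by
      have h4 := Real.add_one_le_exp (-(ε / 8))
      rw [Real.exp_neg] at h4
      have h5 : (0:ℝ) < Real.exp (ε / 8) := Real.exp_pos _
      rw [le_div_iff₀ (by linarith : (0:ℝ) < 1 - ε / 8)]
      have h6 := mul_le_mul_of_nonneg_left h4 h5.le
      rw [mul_inv_cancel₀ (ne_of_gt h5)] at h6
      linarith
    have h6 : 1 / (1 - ε / 8) ≤ 1 + ε / 7 := by
      rw [div_le_iff₀ (by linarith : (0:ℝ) < 1 - ε / 8)]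
      nlinarith
    linarith
  have hfin1 : (1 + α) ^ k * ((1 + ε / 3) * ρ) ≤ (1 + ε) * ρ := by
    have hq : (0:ℝ) ≤ (1 + ε / 3) * ρ := mul_nonneg (by linarith) hρ0
    have h7 := mul_le_mul_of_nonneg_right hPle hq
    nlinarith [h7, mul_nonneg (mul_nonneg hρ0 hε0.le) (show (0:ℝ) ≤ 11 - ε by linarith)]
  have hfin2 : (1 + α) ^ k * (β * k) ≤ 16 * β * L / ε := by
    have hk0 : (0:ℝ) ≤ (k:ℝ) := Nat.cast_nonneg k
    have h1 : (1 + α) ^ k * (β * k) ≤ 2 * (β * k) := by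
      have hq2 : (0:ℝ) ≤ β * k := mul_nonneg hβ.le hk0
      have h8 := mul_le_mul_of_nonneg_right hPle hq2
      nlinarith [h8, mul_nonneg hε0.le hq2]
    have h2 : β * (k:ℝ) ≤ β * (4 * L / ε + 2) := by
      apply mul_le_mul_of_nonneg_left hk2 hβ.le
    have hr : (0:ℝ) < L / ε := div_pos (by linarith) hε0
    have hr2 : 1 ≤ 2 * (L / ε) := by
      rw [show (2:ℝ) * (L / ε) = 2 * L / ε by ring, le_div_iff₀ hε0]
      nlinarith [hL, hε1]
    have e3 : 4 * L / ε = 4 * (L / ε) := by ring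
    have e4 : 16 * β * L / ε = 16 * β * (L / ε) := by ring
    rw [e3] at h2
    rw [e4]
    have h9 := mul_le_mul_of_nonneg_left h2 (by norm_num : (0:ℝ) ≤ 2)
    have h10 := mul_le_mul_of_nonneg_left hr2 hβ.le
    have e5 : 2 * (β * ((k:ℝ))) ≤ 8 * (β * (L / ε)) + 4 * β := by linarith [h9, show (2:ℝ) * (β * (4 * (L / ε) + 2)) = 8 * (β * (L / ε)) + 4 * β from by ring]
    linarith [h1, e5, h10]
  calc D ≤ (1 + α) ^ k * ((1 + ε / 3) * ρ) + (1 + α) ^ k * (β * k) := hDle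
    _ ≤ (1 + ε) * ρ + 16 * β * L / ε := by linarith [hfin1, hfin2]
end

section
/- There exist universal constants c, C > 0 such that the following holds. Let ε ∈ (0, 1), let G = (V, E) be a finite hypergraph on n ≥ 2 vertices, let β > 0, and fix an orientation of G (a head h(e) ∈ e for each edge e) that is (c·ε²/log n, β)-locally optimal, i.e., for every edge e and every endpoint u ∈ e, d⁻(h(e)) ≤ (1 + c·ε²/log n)·d⁻(u) + β. Then the maximum in-degree μ = max_{v ∈ V} d⁻(v) satisfies μ ≤ (1 + ε)·ρ(G) + C·β·(log n)/ε, where ρ(G) = max_{∅ ≠ S ⊆ V} |E(S)|/|S| is the maximum subhypergraph density. -/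
open Finset

/-- In a finite hypergraph whose edges are indexed by `E`, with edge `e` having
(nonempty) endpoint set `ends e`, and with an orientation choosing a head
`h e ∈ ends e` for each edge: the in-degree of a vertex `v` is the number of
edges whose head is `v`. -/
noncomputable def hInDeg {V E : Type*} [Fintype E] [DecidableEq V]
    (h : E → V) (v : V) : ℝ :=
  ((univ.filter fun e => h e = v).card : ℝ)

/-- The density `|E(S)|/|S|` of a set `S` of vertices of a hypergraph: the
number of edges all of whose endpoints lie in `S` (with multiplicity), divided
by `|S|`. -/
noncomputable def hDensity {V E : Type*} [Fintype E] [DecidableEq V]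
    (ends : E → Finset V) (S : Finset V) : ℝ :=
  ((univ.filter fun e => ends e ⊆ S).card : ℝ) / S.card

/-- The maximum subhypergraph density `ρ(G) = max_{∅ ≠ S ⊆ V} |E(S)|/|S|`. -/
noncomputable def hMaxDensity {V E : Type*} [Fintype E] [DecidableEq V]
    (ends : E → Finset V) : ℝ :=
  sSup { d : ℝ | ∃ S : Finset V, S.Nonempty ∧ d = hDensity ends S }

/-!
Fix a vertex of in-degree `μ` and consider the thresholds `tᵢ = μ/(1+α)^i - iβ` and the
superlevel sets `Sᵢ = {v | tᵢ ≤ d⁻(v)}`, all containing that vertex. Local optimality forces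
every edge with head in `Sᵢ` to lie inside `Sᵢ₊₁`, so
`tᵢ |Sᵢ| ≤ ∑_{Sᵢ} d⁻ ≤ |E(Sᵢ₊₁)| ≤ ρ |Sᵢ₊₁|`.
The sets `Sᵢ` cannot grow by a factor `1 + ε/4` in each of `k ≈ 8 log n / ε` consecutive steps,
so `tᵢ ≤ (1 + ε/4) ρ` for some `i < k`, whence `μ ≤ (1+α)^k ((1 + ε/4) ρ + kβ)`.
For `α = ε²/(100 log n)` the factor `(1+α)^k` is at most `1 + ε/2`.
-/

theorem exists_lt_le_mul_of_lt_pow {a : ℕ → ℝ} {r : ℝ} {k : ℕ} (hr : 0 ≤ r) (h0 : 1 ≤ a 0)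
    (hk : a k < r ^ k) : ∃ i < k, a (i + 1) ≤ r * a i := by
  by_contra! hgrow
  have hpow : ∀ i ≤ k, r ^ i ≤ a i := by
    intro i hi
    induction i with
    | zero => simpa using h0
    | succ i ih =>
      calc r ^ (i + 1) = r * r ^ i := pow_succ' r i
        _ ≤ r * a i := mul_le_mul_of_nonneg_left (ih (by omega)) hr
        _ ≤ a (i + 1) := (hgrow i (by omega)).le
  exact (hpow k le_rfl).not_gt hk

theorem one_add_pow_le_one_div_one_sub {α : ℝ} {k : ℕ} (hα : 0 ≤ α) (hαk : α * k < 1) :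
    (1 + α) ^ k ≤ 1 / (1 - α * k) :=
  calc (1 + α) ^ k ≤ Real.exp α ^ k := by
        gcongr
        linarith [Real.add_one_le_exp α]
    _ = Real.exp (α * k) := by rw [← Real.exp_nat_mul, mul_comm]
    _ ≤ 1 / (1 - α * k) := Real.exp_bound_div_one_sub_of_interval (by positivity) hαk

theorem lt_one_add_pow_of_log_lt {x δ : ℝ} {k : ℕ} (hx : 0 < x) (hδ0 : 0 ≤ δ) (hδ2 : δ ≤ 2)
    (hk : Real.log x < k * (δ / 2)) : x < (1 + δ) ^ k := by
  have hlog : δ / 2 ≤ Real.log (1 + δ) := by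
    refine le_trans ?_ (Real.le_log_one_add_of_nonneg hδ0)
    rw [div_le_div_iff₀ (by norm_num) (by linarith)]
    nlinarith
  rw [← Real.log_lt_log_iff hx (by positivity), Real.log_pow]
  exact hk.trans_le (by gcongr)

theorem exists_num_levels {n ε : ℝ} (hn : 2 ≤ n) (hε0 : 0 < ε) (hε1 : ε < 1) :
    ∃ k : ℕ, n < (1 + ε / 4) ^ k ∧ (1 + 1 / 100 * ε ^ 2 / Real.log n) ^ k ≤ 1 + ε / 2 ∧
      (k : ℝ) ≤ 10 * Real.log n / ε := by
  set L := Real.log n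
  have hL : 1 / 2 ≤ L := by
    linarith [Real.log_two_gt_d9, Real.log_le_log two_pos hn]
  set k := ⌊8 * L / ε⌋₊ + 1
  have hk_gt : 8 * L / ε < k := by exact_mod_cast Nat.lt_floor_add_one (8 * L / ε)
  have hk_le : (k : ℝ) ≤ 10 * L / ε := by
    have : 1 ≤ 2 * L / ε := by rw [le_div_iff₀ hε0]; linarith
    have : (⌊8 * L / ε⌋₊ : ℝ) ≤ 8 * L / ε := Nat.floor_le (by positivity)
    push_cast [k]
    linarith [show 8 * L / ε + 2 * L / ε = 10 * L / ε by ring]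
  refine ⟨k, ?_, ?_, hk_le⟩
  · refine lt_one_add_pow_of_log_lt (by positivity) (by positivity) (by linarith) ?_
    rw [div_lt_iff₀ hε0] at hk_gt
    linarith
  · have hαk : 1 / 100 * ε ^ 2 / L * k ≤ ε / 10 :=
      calc 1 / 100 * ε ^ 2 / L * k ≤ 1 / 100 * ε ^ 2 / L * (10 * L / ε) := by gcongr
        _ = ε / 10 := by field_simp; ring
    refine (one_add_pow_le_one_div_one_sub (by positivity) (by linarith)).trans ?_
    rw [div_le_iff₀ (by linarith)]
    nlinarith

section Orientation

variable {V E : Type*} [Fintype E] [DecidableEq V]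

def IsLocallyOptimal (ends : E → Finset V) (h : E → V) (α β : ℝ) : Prop :=
  ∀ e, ∀ u ∈ ends e, hInDeg h (h e) ≤ (1 + α) * hInDeg h u + β

theorem sum_hInDeg (h : E → V) (S : Finset V) :
    ∑ v ∈ S, hInDeg h v = (#{e | h e ∈ S} : ℝ) := by
  simp only [hInDeg]
  exact_mod_cast sum_card_fiberwise_eq_card_filter univ S h

variable [Fintype V]

theorem hDensity_le_hMaxDensity (ends : E → Finset V) {S : Finset V} (hS : S.Nonempty) :
    hDensity ends S ≤ hMaxDensity ends := by
  refine le_csSup ((Set.finite_range (hDensity ends)).bddAbove.mono ?_) ⟨S, hS, rfl⟩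
  rintro _ ⟨T, -, rfl⟩
  exact ⟨T, rfl⟩

theorem hMaxDensity_nonneg [Nonempty V] (ends : E → Finset V) : 0 ≤ hMaxDensity ends :=
  (div_nonneg (Nat.cast_nonneg _) (Nat.cast_nonneg _)).trans
    (hDensity_le_hMaxDensity ends univ_nonempty)

theorem card_edges_subset_le_hMaxDensity_mul (ends : E → Finset V) {S : Finset V}
    (hS : S.Nonempty) : (#{e | ends e ⊆ S} : ℝ) ≤ hMaxDensity ends * #S := by
  have := hDensity_le_hMaxDensity ends hS
  rwa [hDensity, div_le_iff₀ (by exact_mod_cast hS.card_pos)] at this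

noncomputable def superlevel (h : E → V) (t : ℝ) : Finset V :=
  {v | t ≤ hInDeg h v}

@[simp]
theorem mem_superlevel {h : E → V} {t : ℝ} {v : V} :
    v ∈ superlevel h t ↔ t ≤ hInDeg h v := by
  simp [superlevel]

namespace IsLocallyOptimal

variable {ends : E → Finset V} {h : E → V} {α β : ℝ}

theorem ends_subset_superlevel (hopt : IsLocallyOptimal ends h α β) (hα : 0 < 1 + α)
    {s t : ℝ} (hst : (1 + α) * t + β ≤ s) {e : E} (he : h e ∈ superlevel h s) :
    ends e ⊆ superlevel h t := by
  intro u hu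
  rw [mem_superlevel] at he ⊢
  have := hopt e u hu
  nlinarith

theorem mul_card_superlevel_le (hopt : IsLocallyOptimal ends h α β) (hα : 0 < 1 + α)
    {s t : ℝ} (hst : (1 + α) * t + β ≤ s) (ht : (superlevel h t).Nonempty) :
    s * #(superlevel h s) ≤ hMaxDensity ends * #(superlevel h t) :=
  calc s * #(superlevel h s) ≤ ∑ v ∈ superlevel h s, hInDeg h v := by
        rw [mul_comm, ← nsmul_eq_mul]
        exact card_nsmul_le_sum _ _ _ fun v hv => mem_superlevel.mp hv
    _ = #{e | h e ∈ superlevel h s} := sum_hInDeg h _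
    _ ≤ #{e | ends e ⊆ superlevel h t} := by
        gcongr with e _
        exact hopt.ends_subset_superlevel hα hst
    _ ≤ hMaxDensity ends * #(superlevel h t) := card_edges_subset_le_hMaxDensity_mul ends ht

theorem hInDeg_le (hopt : IsLocallyOptimal ends h α β) (hα : 0 ≤ α) (hβ : 0 ≤ β) {δ : ℝ}
    (hδ : 0 ≤ δ) {k : ℕ} (hk : (Fintype.card V : ℝ) < (1 + δ) ^ k) (v : V) :
    hInDeg h v ≤ (1 + α) ^ k * ((1 + δ) * hMaxDensity ends + k * β) := by
  have : Nonempty V := ⟨v⟩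
  set μ := hInDeg h v
  have hμ : 0 ≤ μ := Nat.cast_nonneg _
  set t : ℕ → ℝ := fun i => μ / (1 + α) ^ i - i * β
  have hmem : ∀ i, v ∈ superlevel h (t i) := fun i => by
    rw [mem_superlevel]
    have : μ / (1 + α) ^ i ≤ μ := div_le_self hμ (one_le_pow₀ (by linarith))
    have : 0 ≤ i * β := by positivity
    linarith
  have hstep : ∀ i, (1 + α) * t (i + 1) + β ≤ t i := fun i => by
    have : (1 + α) * (μ / (1 + α) ^ (i + 1)) = μ / (1 + α) ^ i := by
      field_simp
      ring
    simp only [t]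
    push_cast
    nlinarith [mul_nonneg hα (mul_nonneg (by positivity : (0 : ℝ) ≤ i + 1) hβ)]
  have hcard_pos : ∀ i, (0 : ℝ) < #(superlevel h (t i)) := fun i => by
    exact_mod_cast card_pos.mpr ⟨v, hmem i⟩
  obtain ⟨i, hik, hgrowth⟩ := exists_lt_le_mul_of_lt_pow
    (a := fun i => (#(superlevel h (t i)) : ℝ)) (by linarith) (by simpa using hcard_pos 0)
    (lt_of_le_of_lt (by exact_mod_cast card_le_univ _) hk)
  have hti : t i ≤ (1 + δ) * hMaxDensity ends := by
    have hlayer := hopt.mul_card_superlevel_le (by linarith) (hstep i) ⟨v, hmem (i + 1)⟩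
    have := mul_le_mul_of_nonneg_left hgrowth (hMaxDensity_nonneg ends)
    exact le_of_mul_le_mul_right (by linarith) (hcard_pos i)
  have hμi : μ / (1 + α) ^ i ≤ (1 + δ) * hMaxDensity ends + k * β := by
    have : (i : ℝ) ≤ k := by exact_mod_cast hik.le
    have : i * β ≤ k * β := by gcongr
    linarith
  calc μ = (1 + α) ^ i * (μ / (1 + α) ^ i) := by field_simp
    _ ≤ (1 + α) ^ k * ((1 + δ) * hMaxDensity ends + k * β) := by
        gcongr
        linarith

end IsLocallyOptimal

end Orientation

/-- There exist universal constants `c, C > 0` such that for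
every `ε ∈ (0,1)`, every finite hypergraph on `n ≥ 2` vertices, every `β > 0`,
and every orientation that is `(c·ε²/log n, β)`-locally optimal (i.e.
`d⁻(h(e)) ≤ (1 + c·ε²/log n)·d⁻(u) + β` for every edge `e` and endpoint
`u ∈ e`), the maximum in-degree `μ = max_v d⁻(v)` satisfies
`μ ≤ (1+ε)·ρ(G) + C·β·(log n)/ε`. -/
theorem hypergraph_apxLocal_implies_eps_global : ∃ c C : ℝ, 0 < c ∧ 0 < C ∧
    ∀ (V E : Type) [Fintype V] [Fintype E] [DecidableEq V],
    ∀ ends : E → Finset V, (∀ e, (ends e).Nonempty) → 2 ≤ Fintype.card V →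
    ∀ ε : ℝ, 0 < ε → ε < 1 →
    ∀ β : ℝ, 0 < β →
    ∀ h : E → V, (∀ e, h e ∈ ends e) →
    (∀ e, ∀ u ∈ ends e,
      hInDeg h (h e) ≤
        (1 + c * ε ^ 2 / Real.log (Fintype.card V)) * hInDeg h u + β) →
    sSup (Set.range (hInDeg (E := E) h)) ≤
      (1 + ε) * hMaxDensity ends +
        C * β * Real.log (Fintype.card V) / ε := by
  refine ⟨1 / 100, 15, by norm_num, by norm_num, ?_⟩
  intro V E _ _ _ ends _ hcard ε hε0 hε1 β hβ h _ hopt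
  have : Nonempty V := Fintype.card_pos_iff.mp (by omega)
  obtain ⟨k, hcard_lt, hpow, hk⟩ := exists_num_levels (n := Fintype.card V)
    (by exact_mod_cast hcard) hε0 hε1
  set L := Real.log (Fintype.card V)
  have hL : 0 ≤ L := Real.log_nonneg (by exact_mod_cast (by omega : 1 ≤ Fintype.card V))
  refine csSup_le (Set.range_nonempty _) ?_
  rintro _ ⟨v, rfl⟩
  have hρ := hMaxDensity_nonneg (E := E) ends
  calc hInDeg h v
      ≤ (1 + 1 / 100 * ε ^ 2 / L) ^ k * ((1 + ε / 4) * hMaxDensity ends + k * β) :=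
        IsLocallyOptimal.hInDeg_le hopt (by positivity) hβ.le (by positivity) hcard_lt v
    _ ≤ (1 + ε / 2) * ((1 + ε / 4) * hMaxDensity ends + 10 * L / ε * β) := by gcongr
    _ ≤ (1 + ε) * hMaxDensity ends + 15 * β * L / ε := by
        have hx : 0 ≤ β * L / ε := by positivity
        rw [show 10 * L / ε * β = 10 * (β * L / ε) by ring,
          show 15 * β * L / ε = 15 * (β * L / ε) by ring]
        nlinarith [mul_nonneg hρ hε0.le]
end
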